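/- Let λ ⊢ n be a partition whose i-th removable box lies in row k, and let T ∈ SYT(λ) have index i. Let u ∈ S_n be the permutation with u ↝ (T, CSS_i(λ)) and ũ ∈ S_{n−1} the permutation with ũ ↝ (d_i(T), d_i(CSS_i(λ))) under the RSK correspondence. Then the one-line notation of u is obtained from that of ũ by inserting n after the (n−k)-th entry: u = ũ_1⋯ũ_{n−k} n ũ_{n−k+1}⋯ũ_{n−1}. -/

import Mathlib

namespace KLPaper

open Equiv

/-! ### Partitions and standard Young tableaux, represented as lists of rows -/

/-- `lam` is a partition of `n`: a weakly decreasing list of positive parts summing to `n`. -/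
def IsPartition (n : ℕ) (lam : List ℕ) : Prop :=
  lam.Pairwise (· ≥ ·) ∧ (∀ x ∈ lam, 0 < x) ∧ lam.sum = n

/-- The entry of a tableau in row `i`, column `j` (0-based); `0` if out of range. -/
def entryAt (T : List (List ℕ)) (i j : ℕ) : ℕ := (T.getD i []).getD j 0

/-- `T` is a standard Young tableau of shape `lam`: rows have the prescribed lengths,
rows and columns strictly increase, and the multiset of entries is `{1, …, n}`. -/
def IsSYT (lam : List ℕ) (T : List (List ℕ)) : Prop :=
  T.map List.length = lam ∧
  (∀ r ∈ T, r.Pairwise (· < ·)) ∧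
  (∀ i j : ℕ, i + 1 < T.length → j < (T.getD (i + 1) []).length →
    entryAt T i j < entryAt T (i + 1) j) ∧
  T.flatten.Perm (List.range' 1 lam.sum)

/-- The (0-based) index of the row of a tableau containing the value `v`. -/
def rowOf (T : List (List ℕ)) (v : ℕ) : ℕ := T.findIdx (fun r => r.contains v)

/-- The (0-based) index of the column of a tableau containing the value `v`. -/
def colOf (T : List (List ℕ)) (v : ℕ) : ℕ := (T.getD (rowOf T v) []).idxOf v

/-- `j` is a descent of `T` : the value `j+1` lies in a strictly lower row than `j`. -/
def Descent (T : List (List ℕ)) (j : ℕ) : Prop := rowOf T j < rowOf T (j + 1)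

/-- The number of removable boxes of `lam` occurring in the rows `0, …, upto - 1`. -/
def removableCount (lam : List ℕ) (upto : ℕ) : ℕ :=
  ((List.range upto).filter (fun i => decide (lam.getD (i + 1) 0 < lam.getD i 0))).length

/-- The total number of removable boxes of a partition. -/
def numRemovable (lam : List ℕ) : ℕ := removableCount lam lam.length

/-- The (1-based, numbered from the top) list of rows containing removable boxes. -/
def removableRows (lam : List ℕ) : List ℕ :=
  (List.range lam.length).filter (fun i => decide (lam.getD (i + 1) 0 < lam.getD i 0))

/-- The index of a standard Young tableau: the (1-based, counted from the top) number of the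
removable box containing the largest entry `n`. -/
def idx (T : List (List ℕ)) : ℕ :=
  removableCount (T.map List.length) (rowOf T T.flatten.length + 1)

/-- Delete the `i`-th (1-based) removable box from a partition. -/
def deleteRemovable (lam : List ℕ) (i : ℕ) : List ℕ :=
  let row := (removableRows lam).getD (i - 1) 0
  (lam.set row (lam.getD row 0 - 1)).filter (fun x => decide (0 < x))

/-- Delete the box containing the largest entry from a standard Young tableau. -/
def deleteMax (T : List (List ℕ)) : List (List ℕ) :=
  let i := rowOf T T.flatten.length
  (T.set i ((T.getD i []).dropLast)).filter (fun r => !r.isEmpty)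

/-! ### Promotion and (partial) evacuation -/

/-- Overwrite the entry of `T` in position `(i, j)` with `v`. -/
def setEntry (T : List (List ℕ)) (i j v : ℕ) : List (List ℕ) :=
  T.set i ((T.getD i []).set j v)

/-- Slide a hole at position `(i, j)` north-west to the corner `(0,0)`, at each step swapping
the hole with the larger of the entries above it and to its left. -/
def slideNW : ℕ → ℕ → ℕ → List (List ℕ) → List (List ℕ)
  | 0, _, _, T => T
  | fuel + 1, i, j, T =>
    if i = 0 ∧ j = 0 then T
    else if i = 0 then slideNW fuel i (j - 1) (setEntry T i j (entryAt T i (j - 1)))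
    else if j = 0 then slideNW fuel (i - 1) j (setEntry T i j (entryAt T (i - 1) j))
    else if entryAt T i (j - 1) < entryAt T (i - 1) j then
      slideNW fuel (i - 1) j (setEntry T i j (entryAt T (i - 1) j))
    else slideNW fuel i (j - 1) (setEntry T i j (entryAt T i (j - 1)))

/-- Jeu-de-taquin promotion of a standard Young tableau: remove the largest entry, slide the
hole to the north-west corner, increment every entry, and place `1` in the corner. -/
def promote (T : List (List ℕ)) : List (List ℕ) :=
  let n := T.flatten.length
  let i := rowOf T n
  let j := colOf T n
  let T' := slideNW (i + j) i j T
  setEntry (T'.map (fun r => r.map (· + 1))) 0 0 1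

/-- Slide a hole at `(i, j)` south-east, at each step swapping the hole with the smaller of
its right and lower neighbours among the entries `≤ m`; stops when no such neighbour exists,
returning the resulting filling and the final position of the hole. -/
def slideOut (m : ℕ) : ℕ → ℕ → ℕ → List (List ℕ) → List (List ℕ) × ℕ × ℕ
  | 0, i, j, T => (T, i, j)
  | fuel + 1, i, j, T =>
    let r := entryAt T i (j + 1)
    let d := entryAt T (i + 1) j
    let rOk := decide (1 ≤ r ∧ r ≤ m)
    let dOk := decide (1 ≤ d ∧ d ≤ m)
    if rOk && dOk then
      if r < d then slideOut m fuel i (j + 1) (setEntry T i j r)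
      else slideOut m fuel (i + 1) j (setEntry T i j d)
    else if rOk then slideOut m fuel i (j + 1) (setEntry T i j r)
    else if dOk then slideOut m fuel (i + 1) j (setEntry T i j d)
    else (T, i, j)

/-- Inverse promotion applied to the sub-standard-tableau consisting of the entries
`1, …, m` of `T` (the remaining entries are fixed): remove the entry `1`, slide the hole
south-east within the unfixed region, decrement the remaining unfixed entries and place `m`
in the final position of the hole. -/
def prInvOn (T : List (List ℕ)) (m : ℕ) : List (List ℕ) :=
  let res := slideOut m T.flatten.length 0 0 T
  setEntry (res.1.map (fun row => row.map (fun v => if 2 ≤ v ∧ v ≤ m then v - 1 else v)))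
    res.2.1 res.2.2 m

/-- The partial evacuation `ev_k`: starting with the `k` smallest entries unfixed, repeatedly
perform inverse promotion on the unfixed entries and fix the largest unfixed entry.
`evacOn T n` (where `n` is the number of boxes) is the Schützenberger involution. -/
def evacOn : List (List ℕ) → ℕ → List (List ℕ)
  | T, 0 => T
  | T, m + 1 => evacOn (prInvOn T (m + 1)) m

/-! ### RSK -/

/-- Schensted insertion of `x` into a row: returns the new row and the bumped entry. -/
def insertRow : List ℕ → ℕ → List ℕ × Option ℕ
  | [], x => ([x], none)
  | y :: ys, x =>
    if x < y then (x :: ys, some y)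
    else
      let p := insertRow ys x
      (y :: p.1, p.2)

/-- Schensted row insertion of `x` into a tableau. -/
def insertTab : List (List ℕ) → ℕ → List (List ℕ)
  | [], x => [[x]]
  | r :: rs, x =>
    let p := insertRow r x
    match p.2 with
    | none => p.1 :: rs
    | some y => p.1 :: insertTab rs y

/-- Add the label `k` to the recording tableau `Q` in the unique new box of `P'`. -/
def addBox (Q P' : List (List ℕ)) (k : ℕ) : List (List ℕ) :=
  match (List.range P'.length).find?
      (fun i => decide ((Q.getD i []).length < (P'.getD i []).length)) with
  | some i => if i < Q.length then Q.set i ((Q.getD i []) ++ [k]) else Q ++ [[k]]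
  | none => Q

/-- RSK insertion of a word, producing the pair (insertion tableau, recording tableau). -/
def RSKword : List ℕ → ℕ → List (List ℕ) × List (List ℕ) → List (List ℕ) × List (List ℕ)
  | [], _, PQ => PQ
  | x :: xs, k, PQ =>
    let P' := insertTab PQ.1 x
    RSKword xs (k + 1) (P', addBox PQ.2 P' k)

/-- The one-line notation (with values `1, …, n`) of a permutation of `Fin n`. -/
def oneLine (n : ℕ) (v : Perm (Fin n)) : List ℕ :=
  (List.finRange n).map (fun i => (v i : ℕ) + 1)

/-- The RSK correspondence `v ↝ (P, Q)` for permutations. -/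
def RSKmap (n : ℕ) (v : Perm (Fin n)) : List (List ℕ) × List (List ℕ) :=
  RSKword (oneLine n v) 1 ([], [])

/-! ### Coxeter length, Bruhat order, Kazhdan–Lusztig polynomials for `S_n` -/

/-- `s` is a simple transposition `(j, j+1)`. -/
def IsSimpleT {n : ℕ} (s : Perm (Fin n)) : Prop :=
  ∃ j : ℕ, ∃ h : j + 1 < n, s = Equiv.swap ⟨j, Nat.lt_of_succ_lt h⟩ ⟨j + 1, h⟩

/-- The Coxeter length of a permutation: the minimal length of a word in the
simple transpositions expressing it. -/
noncomputable def len {n : ℕ} (w : Perm (Fin n)) : ℕ :=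
  sInf {k | ∃ L : List (Perm (Fin n)), L.length = k ∧ (∀ s ∈ L, IsSimpleT s) ∧ L.prod = w}

/-- One step in the Bruhat order: multiply by a transposition, increasing the length. -/
def BruhatStep {n : ℕ} (x y : Perm (Fin n)) : Prop :=
  (∃ i j : Fin n, i ≠ j ∧ y = x * Equiv.swap i j) ∧ len x < len y

/-- The Bruhat order on `S_n`. -/
def BruhatLe {n : ℕ} : Perm (Fin n) → Perm (Fin n) → Prop :=
  Relation.ReflTransGen BruhatStep

/-- The strict Bruhat order on `S_n`. -/
def BruhatLt {n : ℕ} (x y : Perm (Fin n)) : Prop := BruhatLe x y ∧ x ≠ y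

theorem bruhatLe_len_le {n : ℕ} {x y : Perm (Fin n)} (h : BruhatLe x y) : len x ≤ len y := by
  induction h with
  | refl => exact le_rfl
  | tail _ h2 ih => exact ih.trans h2.2.le

theorem bruhatLt_len_lt {n : ℕ} {x y : Perm (Fin n)} (h : BruhatLt x y) : len x < len y := by
  rcases Relation.ReflTransGen.cases_head h.1 with rfl | ⟨c, hc, hcy⟩
  · exact absurd rfl h.2
  · exact lt_of_lt_of_le hc.2 (bruhatLe_len_le hcy)

open Classical in
/-- A choice of simple transposition `s` with `len (s * w) < len w`, if one exists. -/
noncomputable def descChoice {n : ℕ} (w : Perm (Fin n)) : Option (Perm (Fin n)) :=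
  if h : ∃ s : Perm (Fin n), IsSimpleT s ∧ len (s * w) < len w then some h.choose else none

theorem descChoice_spec {n : ℕ} {w s : Perm (Fin n)} (h : descChoice w = some s) :
    len (s * w) < len w := by
  unfold descChoice at h
  split at h
  · rename_i hex
    obtain rfl : hex.choose = s := Option.some.inj h
    exact hex.choose_spec.2
  · exact absurd h (by simp)

open Classical in
/-- The Kazhdan–Lusztig polynomials `P_{v,w}` of the symmetric group, defined through the
standard recursion: `P_{w,w} = 1`, `P_{v,w} = 0` unless `v ≤ w` in Bruhat order, and for a
simple reflection `s` with `sw < w`,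
`P_{v,w} = q^{1-c} P_{sv,sw} + q^c P_{v,sw} - ∑_{v ≤ z < sw, sz < z} μ(z,sw) q^{(ℓ(w)-ℓ(z))/2} P_{v,z}`
where `c = 1` if `sv < v` and `c = 0` otherwise, and `μ(z,w')` is the coefficient of
`q^{(ℓ(w')-ℓ(z)-1)/2}` in `P_{z,w'}` (zero unless `ℓ(w') - ℓ(z)` is odd). -/
noncomputable def KLpoly {n : ℕ} (v w : Perm (Fin n)) : Polynomial ℤ :=
  if v = w then 1
  else if ¬ BruhatLt v w then 0
  else
    match hd : descChoice w with
    | none => 0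
    | some s =>
      have hlt : len (s * w) < len w := descChoice_spec hd
      Polynomial.X ^ (if len (s * v) < len v then 0 else 1) * KLpoly (s * v) (s * w)
      + Polynomial.X ^ (if len (s * v) < len v then 1 else 0) * KLpoly v (s * w)
      - ∑ z ∈ (Finset.univ.filter (fun z : Perm (Fin n) =>
            BruhatLe v z ∧ BruhatLt z (s * w) ∧ len (s * z) < len z ∧
              (len (s * w) - len z) % 2 = 1)).attach,
          Polynomial.C ((KLpoly z.1 (s * w)).coeff ((len (s * w) - len z.1 - 1) / 2))
            * Polynomial.X ^ ((len w - len z.1) / 2) * KLpoly v z.1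
termination_by len w
decreasing_by
  · exact hlt
  · exact hlt
  · exact hlt
  · have hz := z.2
    simp only [Finset.mem_filter] at hz
    exact lt_trans (bruhatLt_len_lt hz.2.2.1) hlt

open Classical in
/-- The Kazhdan–Lusztig `μ`-coefficient for a pair of permutations: the coefficient of
`q^{(ℓ(w)-ℓ(v)-1)/2}` in `P_{v,w}` for `v < w`, extended symmetrically, and `0` if `v` and
`w` are Bruhat-incomparable (or `ℓ(w) - ℓ(v)` is even). -/
noncomputable def muBarP {n : ℕ} (v w : Perm (Fin n)) : ℤ :=
  if BruhatLt v w ∧ (len w - len v) % 2 = 1 then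
    (KLpoly v w).coeff ((len w - len v - 1) / 2)
  else if BruhatLt w v ∧ (len v - len w) % 2 = 1 then
    (KLpoly w v).coeff ((len v - len w - 1) / 2)
  else 0

/-! ### The row-superstandard recording tableau and `μ̄` for tableaux -/

/-- Auxiliary: fill rows consecutively starting from `start`. -/
def rowStdAux : List ℕ → ℕ → List (List ℕ)
  | [], _ => []
  | a :: rest, start => ((List.range a).map (start + ·)) :: rowStdAux rest (start + a)

/-- The row-superstandard tableau of a given shape: `1, 2, …` filled row by row. -/
def rowStd (lam : List ℕ) : List (List ℕ) := rowStdAux lam 1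

open Classical in
/-- The Kazhdan–Lusztig `μ̄`-coefficient for a pair of standard Young tableaux of the same
shape with `n` boxes: `μ̄(T,R) = μ̄(v,w)` where `v ↝ (T,Q)`, `w ↝ (R,Q)` under RSK for a
fixed recording tableau `Q` of that shape. -/
noncomputable def muBarTab (n : ℕ) (T R : List (List ℕ)) : ℤ :=
  if hT : ∃ v : Perm (Fin n), RSKmap n v = (T, rowStd (T.map List.length)) then
    if hR : ∃ w : Perm (Fin n), RSKmap n w = (R, rowStd (T.map List.length)) then
      muBarP hT.choose hR.choose
    else 0
  else 0

/-! ### The Specht module with its Kazhdan–Lusztig basis -/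

/-- The Kazhdan–Lusztig basis vector `C_T` of the Specht module, realised inside the space of
complex-valued functions on the standard Young tableaux of shape `lam`. -/
def KLvec {lam : List ℕ} (T : {T : List (List ℕ) // IsSYT lam T}) :
    {T : List (List ℕ) // IsSYT lam T} → ℂ :=
  fun R => if R = T then 1 else 0

open Classical in
/-- `ρ` is an action of `S_n` on the span of the tableaux of shape `lam` realising the
Kazhdan–Lusztig basis action on the Specht module `S^lam`:
`s_j · C_T = -C_T` if `j ∈ D(T)`, and
`s_j · C_T = C_T + ∑_{R, j ∈ D(R)} μ̄(T,R) C_R` otherwise. -/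
def KLActionHyp (n : ℕ) (lam : List ℕ)
    (ρ : Representation ℂ (Perm (Fin n)) ({T : List (List ℕ) // IsSYT lam T} → ℂ)) : Prop :=
  ∀ (j : ℕ) (h1 : 1 ≤ j) (h2 : j < n) (T : {T : List (List ℕ) // IsSYT lam T}),
    ρ (Equiv.swap ⟨j - 1, by omega⟩ ⟨j, h2⟩) (KLvec T) =
      if Descent T.1 j then -KLvec T
      else KLvec T + fun R => if Descent R.1 j then ((muBarTab n T.1 R.1 : ℤ) : ℂ) else 0

open Classical in
/-- Promotion as a map on the standard Young tableaux of shape `lam`. -/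
noncomputable def prT {lam : List ℕ} (T : {T : List (List ℕ) // IsSYT lam T}) :
    {T : List (List ℕ) // IsSYT lam T} :=
  if h : IsSYT lam (promote T.1) then ⟨promote T.1, h⟩ else T

open Classical in
/-- Partial evacuation `ev_k` as a map on the standard Young tableaux of shape `lam`. -/
noncomputable def evT {lam : List ℕ} (k : ℕ) (T : {T : List (List ℕ) // IsSYT lam T}) :
    {T : List (List ℕ) // IsSYT lam T} :=
  if h : IsSYT lam (evacOn T.1 k) then ⟨evacOn T.1 k, h⟩ else T

/-! ### Distinguished permutations -/

/-- The permutation of `Fin n` reversing the first `k` elements `0, …, k-1` (i.e. reversing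
the values `1, …, k` in one-line notation) and fixing the rest. -/
def revFirst (n k : ℕ) (hk : k ≤ n) : Perm (Fin n) :=
  Function.Involutive.toPerm
    (fun i => if h : (i : ℕ) < k then ⟨k - 1 - (i : ℕ), by omega⟩ else i)
    (by
      intro i
      by_cases h : (i : ℕ) < k
      · have h2 : k - 1 - (i : ℕ) < k := by omega
        simp only [h, dif_pos, h2]
        apply Fin.ext
        simp only []
        omega
      · simp [h])

/-- The embedding `S_{n-1} → S_n` (as the permutations fixing the last point). -/
noncomputable def permIncl (n : ℕ) : Perm (Fin (n - 1)) →* Perm (Fin n) :=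
  Equiv.Perm.viaEmbeddingHom (Fin.castLEEmb (Nat.sub_le n 1))

/-! ### Parabolic subgroups, descending and separable permutations -/

/-- The simple transposition `s_{j+1} = (j, j+1)` (0-based `j`). -/
def simpleOf (n j : ℕ) : Perm (Fin n) :=
  if h : j + 1 < n then Equiv.swap ⟨j, by omega⟩ ⟨j + 1, h⟩ else 1

/-- The parabolic (standard Young) subgroup of `S_n` generated by the simple transpositions
`s_{j+1}` for `j ∈ J` (0-based). -/
def parab (n : ℕ) (J : Finset ℕ) : Subgroup (Perm (Fin n)) :=
  Subgroup.closure {s | ∃ j ∈ J, s = simpleOf n j}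

/-- `u` is the longest element of the parabolic subgroup `S_J`. -/
noncomputable def IsLongestOf (n : ℕ) (J : Finset ℕ) (u : Perm (Fin n)) : Prop :=
  u ∈ parab n J ∧ ∀ v ∈ parab n J, len v ≤ len u

/-- A permutation is descending if it is of the form `w_{J_k} ⋯ w_{J_1}` for an increasing
chain `J_1 ⊂ ⋯ ⊂ J_k` of non-empty subsets of the simple transpositions, where `w_J` is the
longest element of the parabolic subgroup `S_J`. -/
noncomputable def Descending (n : ℕ) (w : Perm (Fin n)) : Prop :=
  ∃ (k : ℕ) (Js : Fin k → Finset ℕ) (ws : Fin k → Perm (Fin n)),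
    (∀ i, (Js i).Nonempty ∧ Js i ⊆ Finset.range (n - 1)) ∧
    (∀ i j : Fin k, i < j → Js i ⊂ Js j) ∧
    (∀ i, IsLongestOf n (Js i) (ws i)) ∧
    w = (List.ofFn ws).reverse.prod

/-- A permutation is separable if it avoids the patterns `2413` and `3142`. -/
def Separable (n : ℕ) (w : Perm (Fin n)) : Prop :=
  ¬ ∃ i1 i2 i3 i4 : Fin n, i1 < i2 ∧ i2 < i3 ∧ i3 < i4 ∧
    ((w i3 < w i1 ∧ w i1 < w i4 ∧ w i4 < w i2) ∨
     (w i2 < w i4 ∧ w i4 < w i1 ∧ w i1 < w i3))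

/-! ### Column-superstandard tableaux -/

/-- The number of boxes in column `c` of the shape `lam`. -/
def colHeight (lam : List ℕ) (c : ℕ) : ℕ := (lam.filter (fun x => decide (c < x))).length

/-- The column-superstandard tableau `CSS(lam)`: the values `1, …, n` are placed column by
column, left to right, each column top to bottom. -/
def colStd (lam : List ℕ) : List (List ℕ) :=
  (List.range lam.length).map (fun i =>
    (List.range (lam.getD i 0)).map (fun j =>
      ((List.range j).map (colHeight lam)).sum + i + 1))

/-- The column reading word of a tableau: columns left to right, each read bottom to top. -/
def colReading (T : List (List ℕ)) : List ℕ :=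
  ((List.range (T.getD 0 []).length).map (fun j =>
    (((List.range T.length).filter (fun i => decide (j < (T.getD i []).length))).reverse).map
      (fun i => entryAt T i j))).flatten

/-- The tableau `CSS_i(lam)`: `n` is placed in the `i`-th removable box (in row `k`,
1-based); the values `n-1, …, n-k+1` are placed at the ends of rows `k-1, …, 1`; the
remaining values `1, …, n-k` are placed in the remaining boxes column by column. -/
def cssI (lam : List ℕ) (i : ℕ) : List (List ℕ) :=
  let n := lam.sum
  let row0 := (removableRows lam).getD (i - 1) 0
  let lam' := (List.range lam.length).map
    (fun t => if t ≤ row0 then lam.getD t 0 - 1 else lam.getD t 0)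
  let base := colStd lam'
  (List.range lam.length).map (fun t =>
    if t ≤ row0 then (base.getD t []) ++ [n - (row0 - t)] else base.getD t [])


/-!
In `d_i(CSS_i(λ))` the labels `n-k+1, …, n-1` end the rows `1, …, k-1`, so while RSK reads
`ũ_{n-k+1}, …, ũ_{n-1}` the new boxes appear at the ends of the rows `1, 2, …, k-1` in turn.
Reading `n` right after `ũ_{n-k}` puts it at the end of the first row, and each of these later
letters then bumps it exactly one row down. So `n` ends up at the end of row `k`, while the
recording tableau acquires the labels `n-k+1, …, n` at the ends of the rows `1, …, k`: the word
`ũ_1 ⋯ ũ_{n-k} n ũ_{n-k+1} ⋯ ũ_{n-1}` is sent to `(T, CSS_i(λ))`. It equals `u` because RSK is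
injective on words without repeated letters: the row of the largest recording label locates the
box created last, and reverse bumping from that box undoes the last insertion.
-/

/-! ### Schensted insertion -/

theorem insertRow_cases (R : List ℕ) (x : ℕ) :
    (insertRow R x = (R ++ [x], none) ∧ ∀ y ∈ R, ¬ x < y) ∨
    ∃ pre y post, R = pre ++ y :: post ∧ insertRow R x = (pre ++ x :: post, some y) ∧
      x < y ∧ ∀ a ∈ pre, ¬ x < a := by
  induction R with
  | nil => exact Or.inl ⟨rfl, by simp⟩
  | cons a as ih =>
    by_cases hx : x < a
    · exact Or.inr ⟨[], a, as, rfl, by simp [insertRow, hx], hx, by simp⟩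
    · rcases ih with ⟨h, hle⟩ | ⟨pre, y, post, rfl, h, hxy, hpre⟩
      · exact Or.inl ⟨by simp [insertRow, hx, h], List.forall_mem_cons.2 ⟨hx, hle⟩⟩
      · exact Or.inr ⟨a :: pre, y, post, rfl, by simp [insertRow, hx, h], hxy,
          List.forall_mem_cons.2 ⟨hx, hpre⟩⟩

theorem insertRow_of_forall_not_lt {R : List ℕ} {x : ℕ} (h : ∀ y ∈ R, ¬ x < y) :
    insertRow R x = (R ++ [x], none) := by
  rcases insertRow_cases R x with ⟨hR, -⟩ | ⟨pre, y, post, rfl, -, hxy, -⟩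
  · exact hR
  · exact absurd hxy (h y (by simp))

theorem insertRow_append_singleton {R : List ℕ} {x N : ℕ} (h : ∀ y ∈ R, ¬ x < y) (hx : x < N) :
    insertRow (R ++ [N]) x = (R ++ [x], some N) := by
  induction R with
  | nil => simp [insertRow, hx]
  | cons a as ih =>
    simp only [List.cons_append, insertRow, if_neg (h a (by simp)),
      ih fun y hy => h y (by simp [hy])]

/-- The row of the box created by inserting `x` into `P`. -/
def newRow : List (List ℕ) → ℕ → ℕ
  | [], _ => 0
  | r :: rs, x => match (insertRow r x).2 with
    | none => 0
    | some y => newRow rs y + 1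

theorem insertTab_cons_of_insertRow_none {R R' : List ℕ} {x : ℕ} (P : List (List ℕ))
    (h : insertRow R x = (R', none)) :
    insertTab (R :: P) x = R' :: P ∧ newRow (R :: P) x = 0 := by
  simp [insertTab, newRow, h]

theorem insertTab_cons_of_insertRow_some {R R' : List ℕ} {x y : ℕ} (P : List (List ℕ))
    (h : insertRow R x = (R', some y)) :
    insertTab (R :: P) x = R' :: insertTab P y ∧ newRow (R :: P) x = newRow P y + 1 := by
  simp [insertTab, newRow, h]

theorem newRow_le (P : List (List ℕ)) (x : ℕ) : newRow P x ≤ P.length := by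
  induction P generalizing x with
  | nil => simp [newRow]
  | cons R P ih =>
    rcases insertRow_cases R x with ⟨h, -⟩ | ⟨pre, y, post, -, h, -⟩
    · simp [(insertTab_cons_of_insertRow_none P h).2]
    · simpa [(insertTab_cons_of_insertRow_some P h).2] using ih y

theorem length_getD_insertTab (P : List (List ℕ)) (x j : ℕ) :
    ((insertTab P x).getD j []).length
      = (P.getD j []).length + if j = newRow P x then 1 else 0 := by
  induction P generalizing x j with
  | nil => cases j <;> simp [insertTab, newRow]
  | cons R P ih =>
    rcases insertRow_cases R x with ⟨h, -⟩ | ⟨pre, y, post, rfl, h, -⟩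
    · obtain ⟨h1, h2⟩ := insertTab_cons_of_insertRow_none P h
      cases j <;> simp [h1, h2]
    · obtain ⟨h1, h2⟩ := insertTab_cons_of_insertRow_some P h
      cases j with
      | zero => simp [h1, h2]
      | succ j => simpa [h1, h2] using ih y j

theorem length_insertTab (P : List (List ℕ)) (x : ℕ) :
    (insertTab P x).length = max P.length (newRow P x + 1) := by
  induction P generalizing x with
  | nil => simp [insertTab, newRow]
  | cons R P ih =>
    rcases insertRow_cases R x with ⟨h, -⟩ | ⟨pre, y, post, -, h, -⟩
    · obtain ⟨h1, h2⟩ := insertTab_cons_of_insertRow_none P h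
      simp [h1, h2]
    · obtain ⟨h1, h2⟩ := insertTab_cons_of_insertRow_some P h
      simp only [h1, h2, List.length_cons, ih y]
      omega

theorem flatten_insertTab_perm (P : List (List ℕ)) (x : ℕ) :
    (insertTab P x).flatten.Perm (x :: P.flatten) := by
  induction P generalizing x with
  | nil => simp [insertTab]
  | cons R P ih =>
    rcases insertRow_cases R x with ⟨h, -⟩ | ⟨pre, y, post, rfl, h, -⟩
    · rw [(insertTab_cons_of_insertRow_none P h).1]
      simp
    · rw [(insertTab_cons_of_insertRow_some P h).1]
      simp only [List.flatten_cons, List.append_assoc, List.cons_append]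
      exact List.perm_middle.trans <| ((((ih y).append_left post).append_left pre).trans
        (List.perm_middle.append_left pre)).cons x

def RowsIncreasing (P : List (List ℕ)) : Prop := ∀ R ∈ P, R ≠ [] ∧ R.Pairwise (· < ·)

theorem RowsIncreasing.insertTab {P : List (List ℕ)} {x : ℕ} (hP : RowsIncreasing P)
    (hnd : P.flatten.Nodup) (hx : x ∉ P.flatten) : RowsIncreasing (insertTab P x) := by
  induction P generalizing x with
  | nil => simp [KLPaper.insertTab, RowsIncreasing]
  | cons R P ih =>
    simp only [List.flatten_cons, List.nodup_append] at hnd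
    obtain ⟨-, hndP, hdisj⟩ := hnd
    simp only [List.flatten_cons, List.mem_append, not_or] at hx
    have hR := (hP R (by simp)).2
    have hPinc : RowsIncreasing P := fun R' hR' => hP R' (by simp [hR'])
    rcases insertRow_cases R x with ⟨h, hle⟩ | ⟨pre, y, post, rfl, h, hxy, hpre⟩
    · rw [(insertTab_cons_of_insertRow_none P h).1]
      refine List.forall_mem_cons.2 ⟨⟨by simp, List.pairwise_append.2 ⟨hR, by simp, ?_⟩⟩, hPinc⟩
      intro a ha b hb
      rw [List.mem_singleton] at hb
      subst hb
      exact lt_of_le_of_ne (not_lt.1 (hle a ha)) fun hab => hx.1 (hab ▸ ha)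
    · rw [(insertTab_cons_of_insertRow_some P h).1]
      refine List.forall_mem_cons.2 ⟨⟨by simp, ?_⟩, ih hPinc hndP fun hy => ?_⟩
      · rw [List.pairwise_append, List.pairwise_cons] at hR ⊢
        obtain ⟨hpre_inc, ⟨hy_lt, hpost_inc⟩, hcross⟩ := hR
        refine ⟨hpre_inc, ⟨fun b hb => hxy.trans (hy_lt b hb), hpost_inc⟩, ?_⟩
        intro a ha b hb
        rcases List.mem_cons.1 hb with rfl | hb
        · exact lt_of_le_of_ne (not_lt.1 (hpre a ha)) fun hab => hx.1 (hab ▸ by simp [ha])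
        · exact hcross a ha b (by simp [hb])
      · exact hdisj y (by simp) y hy rfl

/-! ### Adding and removing the last box of a row -/

def addAtRow (P : List (List ℕ)) (m v : ℕ) : List (List ℕ) :=
  if m < P.length then P.set m (P.getD m [] ++ [v]) else P ++ [[v]]

@[simp]
theorem addAtRow_nil (m v : ℕ) : addAtRow [] m v = [[v]] := by simp [addAtRow]

@[simp]
theorem addAtRow_cons_zero (R : List ℕ) (P : List (List ℕ)) (v : ℕ) :
    addAtRow (R :: P) 0 v = (R ++ [v]) :: P := by simp [addAtRow]

@[simp]
theorem addAtRow_cons_succ (R : List ℕ) (P : List (List ℕ)) (m v : ℕ) :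
    addAtRow (R :: P) (m + 1) v = R :: addAtRow P m v := by
  by_cases h : m < P.length <;> simp [addAtRow, h]

theorem getD_addAtRow {P : List (List ℕ)} {m : ℕ} (h : m ≤ P.length) (v j : ℕ) :
    (addAtRow P m v).getD j [] = if j = m then P.getD m [] ++ [v] else P.getD j [] := by
  induction m generalizing P j with
  | zero => cases P <;> cases j <;> simp
  | succ m ih =>
    obtain _ | ⟨R, P⟩ := P
    · simp at h
    · cases j with
      | zero => simp
      | succ j => simpa using ih (P := P) (by simpa using h) j

theorem length_addAtRow (P : List (List ℕ)) (m v : ℕ) :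
    (addAtRow P m v).length = if m < P.length then P.length else P.length + 1 := by
  unfold addAtRow; split <;> simp

theorem flatten_addAtRow_perm {P : List (List ℕ)} {m : ℕ} (v : ℕ) (h : m ≤ P.length) :
    (addAtRow P m v).flatten.Perm (v :: P.flatten) := by
  induction m generalizing P with
  | zero => cases P <;> simp
  | succ m ih =>
    obtain _ | ⟨R, P⟩ := P
    · simp at h
    · simpa using ((ih (by simpa using h)).append_left R).trans List.perm_middle

theorem mem_flatten_of_mem_getD {T : List (List ℕ)} {v j : ℕ} (h : v ∈ T.getD j []) :
    v ∈ T.flatten := by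
  rcases Nat.lt_or_ge j T.length with hj | hj
  · rw [List.getD_eq_getElem _ _ hj] at h
    exact List.mem_flatten.2 ⟨_, List.getElem_mem hj, h⟩
  · rw [List.getD_eq_default _ _ hj] at h
    simp at h

theorem eq_of_mem_getD_of_mem_getD {T : List (List ℕ)} (hnd : T.flatten.Nodup) {v j₁ j₂ : ℕ}
    (h₁ : v ∈ T.getD j₁ []) (h₂ : v ∈ T.getD j₂ []) : j₁ = j₂ := by
  induction T generalizing j₁ j₂ with
  | nil => simp at h₁
  | cons R T ih =>
    rw [List.flatten_cons, List.nodup_append] at hnd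
    obtain ⟨-, hndT, hdisj⟩ := hnd
    cases j₁ <;> cases j₂
    · rfl
    · exact absurd rfl (hdisj v h₁ v (mem_flatten_of_mem_getD h₂))
    · exact absurd rfl (hdisj v h₂ v (mem_flatten_of_mem_getD h₁))
    · simp only [List.getD_cons_succ] at h₁ h₂
      rw [ih hndT h₁ h₂]

theorem rowOf_eq {T : List (List ℕ)} {v r : ℕ} (hr : r < T.length) (hv : v ∈ T.getD r [])
    (hlt : ∀ j < r, v ∉ T.getD j []) : rowOf T v = r := by
  rw [List.getD_eq_getElem _ _ hr] at hv
  refine (List.findIdx_eq hr).2 ⟨by simpa using hv, fun j hj => ?_⟩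
  have := hlt j hj
  rw [List.getD_eq_getElem _ _ (hj.trans hr)] at this
  simpa using this

theorem rowOf_mem {T : List (List ℕ)} {v : ℕ} (h : v ∈ T.flatten) :
    v ∈ T.getD (rowOf T v) [] ∧ rowOf T v < T.length := by
  obtain ⟨R, hR, hvR⟩ := List.mem_flatten.1 h
  have hlt : rowOf T v < T.length := List.findIdx_lt_length_of_exists ⟨R, hR, by simpa using hvR⟩
  refine ⟨?_, hlt⟩
  rw [List.getD_eq_getElem _ _ hlt]
  simpa [rowOf] using List.findIdx_getElem (w := hlt)

theorem rowOf_addAtRow {Q : List (List ℕ)} {r N : ℕ} (hr : r ≤ Q.length) (hN : N ∉ Q.flatten) :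
    rowOf (addAtRow Q r N) N = r := by
  refine rowOf_eq ?_ (by rw [getD_addAtRow hr, if_pos rfl]; simp) fun j hj hmem => hN ?_
  · rw [length_addAtRow]; split <;> omega
  · rw [getD_addAtRow hr, if_neg hj.ne] at hmem
    exact mem_flatten_of_mem_getD hmem

def removeRowLast (P : List (List ℕ)) (r : ℕ) : List (List ℕ) :=
  (P.set r (P.getD r []).dropLast).filter (fun l => !l.isEmpty)

theorem removeRowLast_cons_succ {R : List ℕ} (hR : R ≠ []) (P : List (List ℕ)) (r : ℕ) :
    removeRowLast (R :: P) (r + 1) = R :: removeRowLast P r := by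
  simp [removeRowLast, hR]

theorem removeRowLast_addAtRow {Q : List (List ℕ)} {r : ℕ} (hQ : ∀ R ∈ Q, R ≠ [])
    (hr : r ≤ Q.length) (v : ℕ) : removeRowLast (addAtRow Q r v) r = Q := by
  have hfilter : Q.filter (fun l => !l.isEmpty) = Q :=
    List.filter_eq_self.2 fun R hR => by simpa using hQ R hR
  unfold removeRowLast
  rw [getD_addAtRow hr, if_pos rfl, List.dropLast_concat]
  rcases Nat.lt_or_ge r Q.length with h | h
  · rw [addAtRow, if_pos h, List.set_set, List.getD_eq_getElem _ _ h, List.set_getElem_self,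
      hfilter]
  · obtain rfl : r = Q.length := by omega
    rw [addAtRow, if_neg (lt_irrefl _), List.getD_eq_default _ _ le_rfl,
      List.set_append_right _ _ le_rfl]
    simpa using hfilter

theorem getD_removeRowLast_of_lt {X : List (List ℕ)} (hX : ∀ R ∈ X, R ≠ []) {m r : ℕ}
    (hm : m < r) : (removeRowLast X r).getD m [] = X.getD m [] := by
  induction X generalizing m r with
  | nil => simp [removeRowLast]
  | cons R X ih =>
    obtain ⟨r, rfl⟩ : ∃ r', r = r' + 1 := ⟨r - 1, by omega⟩
    rw [removeRowLast_cons_succ (hX R (by simp))]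
    cases m with
    | zero => rfl
    | succ m => exact ih (fun R' hR' => hX R' (by simp [hR'])) (by omega)

theorem addAtRow_removeRowLast {X : List (List ℕ)} (hX : ∀ R ∈ X, R ≠ []) {r N : ℕ}
    {R : List ℕ} (hr : X.getD r [] = R ++ [N]) (hlast : R = [] → r + 1 = X.length) :
    addAtRow (removeRowLast X r) r N = X := by
  induction X generalizing r with
  | nil => simp at hr
  | cons R' X ih =>
    have hX' : ∀ R ∈ X, R ≠ [] := fun R' hR' => hX R' (by simp [hR'])
    cases r with
    | zero =>
      obtain rfl : R' = R ++ [N] := hr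
      have hfilter : X.filter (fun l => !l.isEmpty) = X :=
        List.filter_eq_self.2 fun R hR => by simpa using hX' R hR
      rcases eq_or_ne R [] with rfl | hR
      · obtain rfl : X = [] := List.length_eq_zero_iff.1 (by simpa using (hlast rfl).symm)
        rfl
      · simp [removeRowLast, hR, hfilter]
    | succ r =>
      rw [removeRowLast_cons_succ (hX R' (by simp)), addAtRow_cons_succ,
        ih hX' hr fun h => by simpa using hlast h]

theorem deleteMax_eq_removeRowLast (T : List (List ℕ)) :
    deleteMax T = removeRowLast T (rowOf T T.flatten.length) := rfl

/-! ### RSK of a word -/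

def rsk (w : List ℕ) : List (List ℕ) × List (List ℕ) := RSKword w 1 ([], [])

def SameShape (Q P : List (List ℕ)) : Prop :=
  Q.length = P.length ∧ ∀ j, (Q.getD j []).length = (P.getD j []).length

theorem SameShape.addBox {P Q : List (List ℕ)} (hs : SameShape Q P) (x k : ℕ) :
    addBox Q (insertTab P x) k = addAtRow Q (newRow P x) k := by
  have hfind : (List.range (insertTab P x).length).find?
      (fun i => decide ((Q.getD i []).length < ((insertTab P x).getD i []).length))
        = some (newRow P x) := by
    rw [List.find?_range_eq_some]
    refine ⟨?_, ?_, fun j hj => ?_⟩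
    · rw [length_getD_insertTab, hs.2]; simp
    · rw [List.mem_range, length_insertTab]; omega
    · rw [length_getD_insertTab, if_neg hj.ne, hs.2]; simp
  unfold KLPaper.addBox addAtRow
  rw [hfind, hs.1]

theorem SameShape.insertTab {P Q : List (List ℕ)} (hs : SameShape Q P) (x k : ℕ) :
    SameShape (addAtRow Q (newRow P x) k) (insertTab P x) := by
  have hr : newRow P x ≤ Q.length := hs.1 ▸ newRow_le P x
  refine ⟨?_, fun j => ?_⟩
  · have := newRow_le P x
    rw [length_addAtRow, length_insertTab, hs.1]
    split <;> omega
  · rw [getD_addAtRow hr, length_getD_insertTab]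
    split
    · next hj => rw [List.length_append, hj, hs.2]; rfl
    · next hj => rw [hs.2]; rfl

theorem SameShape.forall_ne_nil {P Q : List (List ℕ)} (hs : SameShape Q P)
    (hP : ∀ R ∈ P, R ≠ []) : ∀ R ∈ Q, R ≠ [] := by
  intro R hR
  obtain ⟨j, hj, rfl⟩ := List.mem_iff_getElem.1 hR
  have hjP : j < P.length := hs.1 ▸ hj
  have hlen := hs.2 j
  rw [List.getD_eq_getElem _ _ hj, List.getD_eq_getElem _ _ hjP] at hlen
  exact List.ne_nil_of_length_pos (hlen ▸ List.length_pos_of_ne_nil (hP _ (List.getElem_mem hjP)))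

theorem sameShape_rsk (w : List ℕ) : SameShape (rsk w).2 (rsk w).1 := by
  suffices ∀ k PQ, SameShape PQ.2 PQ.1 → SameShape (RSKword w k PQ).2 (RSKword w k PQ).1 from
    this 1 ([], []) ⟨rfl, fun _ => rfl⟩
  induction w with
  | nil => exact fun _ _ h => h
  | cons x w ih =>
    intro k PQ hs
    simp only [RSKword]
    exact ih _ _ (by rw [hs.addBox]; exact hs.insertTab x k)

theorem rsk_append_singleton (w : List ℕ) (x : ℕ) :
    rsk (w ++ [x]) = (insertTab (rsk w).1 x,
      addAtRow (rsk w).2 (newRow (rsk w).1 x) (w.length + 1)) := by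
  have key : ∀ k PQ, RSKword (w ++ [x]) k PQ = RSKword [x] (k + w.length) (RSKword w k PQ) := by
    induction w with
    | nil => simp [RSKword]
    | cons y w ih => intro k PQ; simp [RSKword, ih, Nat.add_assoc, Nat.add_comm 1]
  change RSKword (w ++ [x]) 1 ([], []) = _
  rw [key]
  change (insertTab (rsk w).1 x, addBox (rsk w).2 (insertTab (rsk w).1 x) (1 + w.length)) = _
  rw [(sameShape_rsk w).addBox, Nat.add_comm 1]

theorem flatten_rsk_fst_perm (w : List ℕ) : (rsk w).1.flatten.Perm w := by
  induction w using List.reverseRecOn with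
  | nil => simp [rsk, RSKword]
  | append_singleton w x ih =>
    rw [rsk_append_singleton]
    exact ((flatten_insertTab_perm _ x).trans (ih.cons x)).trans
      (List.perm_append_singleton x w).symm

theorem flatten_rsk_snd_perm (w : List ℕ) :
    (rsk w).2.flatten.Perm (List.range' 1 w.length) := by
  induction w using List.reverseRecOn with
  | nil => simp [rsk, RSKword]
  | append_singleton w x ih =>
    rw [rsk_append_singleton, List.length_append, List.length_singleton, List.range'_1_concat,
      Nat.add_comm 1 w.length]
    exact ((flatten_addAtRow_perm _ ((sameShape_rsk w).1 ▸ newRow_le _ x)).trans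
      (ih.cons _)).trans (List.perm_append_singleton _ _).symm

theorem length_rsk_snd_flatten (w : List ℕ) : (rsk w).2.flatten.length = w.length := by
  simpa using (flatten_rsk_snd_perm w).length_eq

theorem rowsIncreasing_rsk {w : List ℕ} (hw : w.Nodup) : RowsIncreasing (rsk w).1 := by
  induction w using List.reverseRecOn with
  | nil => simp [rsk, RSKword, RowsIncreasing]
  | append_singleton w x ih =>
    rw [List.nodup_append] at hw
    have hperm := flatten_rsk_fst_perm w
    rw [rsk_append_singleton]
    exact (ih hw.1).insertTab (hperm.nodup_iff.2 hw.1)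
      fun hx => hw.2.2 x (hperm.mem_iff.1 hx) x (by simp) rfl

theorem mem_rsk_snd_getD_newRow (w : List ℕ) {t : ℕ} (ht : t < w.length) :
    t + 1 ∈ (rsk w).2.getD (newRow (rsk (w.take t)).1 w[t]) [] := by
  induction w using List.reverseRecOn with
  | nil => simp at ht
  | append_singleton w x ih =>
    have hr := (sameShape_rsk w).1 ▸ newRow_le (rsk w).1 x
    rw [rsk_append_singleton, getD_addAtRow hr]
    rcases Nat.lt_or_ge t w.length with h | h
    · rw [List.take_append_of_le_length h.le, List.getElem_append_left h]
      split
      · next heq => exact List.mem_append_left _ (heq ▸ ih h)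
      · exact ih h
    · obtain rfl : t = w.length := by
        rw [List.length_append, List.length_singleton] at ht; omega
      simp

/-! ### Injectivity -/

/-- Reverse row bumping: `y` replaces the largest entry of the row smaller than `y`, which is
returned. -/
def revRow : List ℕ → ℕ → List ℕ × ℕ
  | [], y => ([], y)
  | a :: as, y =>
    if as.any (fun b => decide (b < y)) then ((a :: (revRow as y).1), (revRow as y).2)
    else (y :: as, a)

theorem revRow_eq {pre post : List ℕ} {x y : ℕ} (hxy : x < y) (hpost : ∀ b ∈ post, ¬ b < y) :
    revRow (pre ++ x :: post) y = (pre ++ y :: post, x) := by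
  induction pre with
  | nil => rw [List.nil_append, revRow, if_neg (by simpa using hpost)]; rfl
  | cons a pre ih =>
    have h : (pre ++ x :: post).any (fun b => decide (b < y)) = true := by simp [hxy]
    simp [revRow, h, ih]

/-- Reverse bumping of `y` upwards through the rows `r - 1, …, 0` of `P`. -/
def unbump : List (List ℕ) → ℕ → ℕ → List (List ℕ) × ℕ
  | P, 0, y => (P, y)
  | [], _ + 1, y => ([], y)
  | R :: P, r + 1, y =>
    ((revRow R (unbump P r y).2).1 :: (unbump P r y).1, (revRow R (unbump P r y).2).2)

def extractAt (P : List (List ℕ)) (r : ℕ) : List (List ℕ) × ℕ :=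
  unbump (removeRowLast P r) r ((P.getD r []).getLastD 0)

theorem extractAt_insertTab {P : List (List ℕ)} {x : ℕ} (hP : RowsIncreasing P)
    (hnd : P.flatten.Nodup) (hx : x ∉ P.flatten) :
    extractAt (insertTab P x) (newRow P x) = (P, x) := by
  induction P generalizing x with
  | nil => rfl
  | cons R P ih =>
    rw [List.flatten_cons, List.nodup_append] at hnd
    simp only [List.flatten_cons, List.mem_append, not_or] at hx
    have hPinc : RowsIncreasing P := fun R' hR' => hP R' (by simp [hR'])
    rcases insertRow_cases R x with ⟨h, -⟩ | ⟨pre, y, post, rfl, h, hxy, -⟩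
    · obtain ⟨h1, h2⟩ := insertTab_cons_of_insertRow_none P h
      rw [h1, h2, extractAt, ← addAtRow_cons_zero,
        removeRowLast_addAtRow (fun R' hR' => (hP R' hR').1) (Nat.zero_le _)]
      simp [unbump]
    · obtain ⟨h1, h2⟩ := insertTab_cons_of_insertRow_some P h
      have ih' := ih hPinc hnd.2.1 fun hy => hnd.2.2 y (by simp) y hy rfl
      have hpost : ∀ b ∈ post, ¬ b < y := by
        have hsorted := List.pairwise_append.1 (hP (pre ++ y :: post) (by simp)).2
        exact fun b hb => not_lt.2 ((List.pairwise_cons.1 hsorted.2.1).1 b hb).le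
      rw [h1, h2]
      rw [extractAt] at ih' ⊢
      rw [removeRowLast_cons_succ (by simp), List.getD_cons_succ, unbump, ih', revRow_eq hxy hpost]

theorem rsk_append_singleton_undo {w : List ℕ} {x : ℕ} (hw : (w ++ [x]).Nodup) :
    extractAt (rsk (w ++ [x])).1 (rowOf (rsk (w ++ [x])).2 (w.length + 1)) = ((rsk w).1, x) ∧
      removeRowLast (rsk (w ++ [x])).2 (rowOf (rsk (w ++ [x])).2 (w.length + 1)) = (rsk w).2 := by
  rw [List.nodup_append] at hw
  have hperm := flatten_rsk_fst_perm w
  have hr := (sameShape_rsk w).1 ▸ newRow_le (rsk w).1 x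
  have hN : w.length + 1 ∉ (rsk w).2.flatten := by
    rw [(flatten_rsk_snd_perm w).mem_iff, List.mem_range'_1]; omega
  have hinc := rowsIncreasing_rsk hw.1
  rw [rsk_append_singleton, rowOf_addAtRow hr hN]
  exact ⟨extractAt_insertTab hinc (hperm.nodup_iff.2 hw.1)
      fun hx => hw.2.2 x (hperm.mem_iff.1 hx) x (by simp) rfl,
    removeRowLast_addAtRow ((sameShape_rsk w).forall_ne_nil fun R hR => (hinc R hR).1) hr _⟩

theorem rsk_injective {w₁ w₂ : List ℕ} (h₁ : w₁.Nodup) (h₂ : w₂.Nodup) (h : rsk w₁ = rsk w₂) :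
    w₁ = w₂ := by
  have hlen : w₁.length = w₂.length := by
    rw [← length_rsk_snd_flatten, h, length_rsk_snd_flatten]
  induction w₁ using List.reverseRecOn generalizing w₂ with
  | nil => exact (List.length_eq_zero_iff.1 hlen.symm).symm
  | append_singleton w₁ x₁ ih =>
    rcases w₂.eq_nil_or_concat with rfl | ⟨w₂, x₂, rfl⟩
    · simp at hlen
    rw [List.concat_eq_append] at h₂ h hlen ⊢
    simp only [List.length_append, List.length_singleton, Nat.add_right_cancel_iff] at hlen
    obtain ⟨hP₁, hQ₁⟩ := rsk_append_singleton_undo h₁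
    obtain ⟨hP₂, hQ₂⟩ := rsk_append_singleton_undo h₂
    rw [h, hlen, hP₂, Prod.mk.injEq] at hP₁
    rw [h, hlen, hQ₂] at hQ₁
    rw [ih (List.nodup_append.1 h₁).1 (List.nodup_append.1 h₂).1 (Prod.ext hP₁.1 hQ₁).symm hlen,
      hP₁.2]

/-! ### Inserting a largest letter -/

theorem insertTab_of_forall_lt {P : List (List ℕ)} {x : ℕ} (h : ∀ y ∈ P.flatten, y < x) :
    insertTab P x = addAtRow P 0 x ∧ newRow P x = 0 := by
  obtain _ | ⟨R, P⟩ := P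
  · simp [KLPaper.insertTab, newRow]
  · have hR := insertRow_of_forall_not_lt (R := R) (x := x)
      fun y hy => not_lt.2 (h y (by simp [hy])).le
    simpa using insertTab_cons_of_insertRow_none P hR

theorem insertTab_addAtRow_of_forall_lt {P : List (List ℕ)} {x N m : ℕ}
    (hN : ∀ y ∈ P.flatten, y < N) (hx : x < N) (hm : newRow P x = m) :
    insertTab (addAtRow P m N) x = addAtRow (insertTab P x) (m + 1) N ∧
      newRow (addAtRow P m N) x = m + 1 := by
  induction P generalizing x m with
  | nil =>
    subst hm
    simpa [KLPaper.insertTab, newRow] using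
      insertTab_cons_of_insertRow_some [] (insertRow_append_singleton (R := []) (by simp) hx)
  | cons R P ih =>
    have hNP : ∀ y ∈ P.flatten, y < N := fun y hy => hN y (by simp [hy])
    rcases insertRow_cases R x with ⟨h, hle⟩ | ⟨pre, y, post, rfl, h, -⟩
    · obtain ⟨h1, h2⟩ := insertTab_cons_of_insertRow_none P h
      subst hm
      obtain ⟨h3, h4⟩ := insertTab_cons_of_insertRow_some P (insertRow_append_singleton hle hx)
      obtain ⟨h5, h6⟩ := insertTab_of_forall_lt hNP
      simp [h1, h2, h3, h4, h5, h6]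
    · obtain ⟨h1, h2⟩ := insertTab_cons_of_insertRow_some P h
      subst hm
      obtain ⟨h3, h4⟩ := ih hNP (hN y (by simp)) rfl
      obtain ⟨h5, h6⟩ := insertTab_cons_of_insertRow_some (addAtRow P (newRow P y) N) h
      simp [h1, h2, h3, h4, h5, h6]

theorem rsk_insert_max_of_newRow {a b : List ℕ} {N : ℕ} (hN : ∀ y ∈ a ++ b, y < N)
    (hrows : ∀ m (hm : m < b.length), newRow (rsk (a ++ b.take m)).1 b[m] = m) :
    rsk (a ++ N :: b) = (addAtRow (rsk (a ++ b)).1 b.length N,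
      addAtRow (rsk (a ++ b)).2 b.length (a.length + b.length + 1)) := by
  have hlt : ∀ y ∈ (rsk (a ++ b)).1.flatten, y < N :=
    fun y hy => hN y ((flatten_rsk_fst_perm _).mem_iff.1 hy)
  induction b using List.reverseRecOn with
  | nil =>
    obtain ⟨h1, h2⟩ := insertTab_of_forall_lt (by simpa using hlt)
    simp only [List.append_nil, List.length_nil, Nat.add_zero]
    rw [rsk_append_singleton, h1, h2]
  | append_singleton b x ih =>
    have hN' : ∀ y ∈ a ++ b, y < N :=
      fun y hy => hN y (by rw [← List.append_assoc]; exact List.mem_append_left _ hy)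
    have hrows' : ∀ j (hj : j < b.length), newRow (rsk (a ++ b.take j)).1 b[j] = j := by
      intro j hj
      have := hrows j (by rw [List.length_append, List.length_singleton]; omega)
      rwa [List.take_append_of_le_length hj.le, List.getElem_append_left hj] at this
    have hrow : newRow (rsk (a ++ b)).1 x = b.length := by simpa using hrows b.length (by simp)
    obtain ⟨h1, h2⟩ := insertTab_addAtRow_of_forall_lt (fun y hy => hN' y
      ((flatten_rsk_fst_perm _).mem_iff.1 hy)) (hN x (by simp)) hrow
    rw [show a ++ N :: (b ++ [x]) = (a ++ N :: b) ++ [x] by simp, rsk_append_singleton,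
      ih hN' hrows' fun y hy => hN' y ((flatten_rsk_fst_perm _).mem_iff.1 hy), h1, h2,
      ← List.append_assoc, rsk_append_singleton, hrow]
    simp only [List.length_append, List.length_cons]
    congr 2

theorem rsk_insert_max {v : List ℕ} {N p q : ℕ} (hlen : v.length = p + q)
    (hN : ∀ y ∈ v, y < N) (hQ : ∀ m < q, p + m + 1 ∈ (rsk v).2.getD m []) :
    rsk (v.take p ++ N :: v.drop p) =
      (addAtRow (rsk v).1 q N, addAtRow (rsk v).2 q (p + q + 1)) := by
  have hQnd : (rsk v).2.flatten.Nodup := (flatten_rsk_snd_perm v).nodup_iff.2 List.nodup_range'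
  have hb : (v.drop p).length = q := by simp [hlen]
  have key := rsk_insert_max_of_newRow (a := v.take p) (b := v.drop p) (N := N)
    (by rwa [List.take_append_drop]) fun m hm => by
      have hlabel := mem_rsk_snd_getD_newRow v (t := p + m) (by omega)
      rw [List.take_add, ← List.getElem_drop] at hlabel
      exacts [eq_of_mem_getD_of_mem_getD hQnd hlabel (hQ m (hb ▸ hm)), hm]
  rwa [List.take_append_drop, hb, List.length_take_of_le (by omega)] at key

/-! ### Standard Young tableaux -/

theorem eq_dropLast_append_of_forall_le {R : List ℕ} {v : ℕ} (hR : R.Pairwise (· < ·))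
    (hv : v ∈ R) (hmax : ∀ y ∈ R, y ≤ v) : R = R.dropLast ++ [v] := by
  have hne : R ≠ [] := List.ne_nil_of_mem hv
  have hsplit := List.dropLast_append_getLast hne
  rw [← hsplit, List.mem_append, List.mem_singleton] at hv
  rcases hv with hv | hlast
  · have := (List.pairwise_append.1 (hsplit ▸ hR)).2.2 _ hv _ (List.mem_singleton_self _)
    exact absurd (hmax _ (List.getLast_mem hne)) (not_le.2 this)
  · rw [hlast, hsplit]

theorem lt_length_of_getD_succ_lt {lam : List ℕ} {r : ℕ}
    (hr : lam.getD (r + 1) 0 < lam.getD r 0) : r < lam.length := by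
  by_contra h
  have : lam.getD r 0 = 0 := List.getD_eq_default _ _ (by omega)
  omega

theorem removableRows_getD_removableCount {lam : List ℕ} {r : ℕ}
    (hr : lam.getD (r + 1) 0 < lam.getD r 0) :
    (removableRows lam).getD (removableCount lam (r + 1) - 1) 0 = r := by
  have hrL := lt_length_of_getD_succ_lt hr
  obtain ⟨s, hs⟩ : ∃ s, lam.length = (r + 1) + s := ⟨lam.length - (r + 1), by omega⟩
  unfold removableRows removableCount
  rw [hs, List.range_add, List.filter_append, List.range_succ, List.filter_append,
    List.filter_singleton, decide_eq_true hr, cond_true, List.length_append, List.length_singleton,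
    Nat.add_sub_cancel, List.append_assoc, List.getD_append_right _ _ _ _ le_rfl, Nat.sub_self]
  rfl

section SYT

variable {lam : List ℕ} {T : List (List ℕ)}

theorem forall_ne_nil_of_map_length_eq (hT : T.map List.length = lam)
    (hpos : ∀ x ∈ lam, 0 < x) : ∀ R ∈ T, R ≠ [] := fun _ hR =>
  List.ne_nil_of_length_pos (hpos _ (hT ▸ List.mem_map_of_mem hR))

theorem length_getD_of_map_length_eq (hT : T.map List.length = lam) (t : ℕ) :
    (T.getD t []).length = lam.getD t 0 := by
  rw [← hT]
  rcases Nat.lt_or_ge t T.length with ht | ht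
  · rw [List.getD_eq_getElem _ _ ht, List.getD_eq_getElem _ _ (by simpa using ht),
      List.getElem_map]
  · rw [List.getD_eq_default _ _ ht, List.getD_eq_default _ _ (by simpa using ht)]; rfl

theorem IsSYT.length_flatten (hT : IsSYT lam T) : T.flatten.length = lam.sum := by
  simpa using hT.2.2.2.length_eq

theorem IsSYT.le_sum_of_mem_flatten (hT : IsSYT lam T) {v : ℕ} (hv : v ∈ T.flatten) :
    v ≤ lam.sum := by
  have := List.mem_range'_1.1 (hT.2.2.2.mem_iff.1 hv)
  omega

theorem IsSYT.sum_mem_flatten (hT : IsSYT lam T) (hn : 0 < lam.sum) : lam.sum ∈ T.flatten :=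
  hT.2.2.2.mem_iff.2 (List.mem_range'_1.2 ⟨hn, by omega⟩)

theorem IsSYT.exists_getD_rowOf_eq (hT : IsSYT lam T) (hn : 0 < lam.sum) :
    rowOf T lam.sum < T.length ∧ ∃ R, T.getD (rowOf T lam.sum) [] = R ++ [lam.sum] := by
  obtain ⟨hmem, hlt⟩ := rowOf_mem (hT.sum_mem_flatten hn)
  have hRT : T.getD (rowOf T lam.sum) [] ∈ T := by
    rw [List.getD_eq_getElem _ _ hlt]; exact List.getElem_mem hlt
  exact ⟨hlt, _, eq_dropLast_append_of_forall_le (hT.2.1 _ hRT) hmem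
    fun y hy => hT.le_sum_of_mem_flatten (List.mem_flatten.2 ⟨_, hRT, hy⟩)⟩

theorem IsSYT.getD_succ_lt_getD_rowOf (hT : IsSYT lam T) (hn : 0 < lam.sum) :
    lam.getD (rowOf T lam.sum + 1) 0 < lam.getD (rowOf T lam.sum) 0 := by
  obtain ⟨-, R, hR⟩ := hT.exists_getD_rowOf_eq hn
  set r := rowOf T lam.sum
  have hlenr : lam.getD r 0 = R.length + 1 := by rw [← length_getD_of_map_length_eq hT.1, hR]; simp
  by_contra! hge
  have hlen : R.length < (T.getD (r + 1) []).length := by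
    rw [length_getD_of_map_length_eq hT.1]; omega
  have hr1 : r + 1 < T.length := by
    by_contra h
    rw [List.getD_eq_default _ _ (by omega)] at hlen
    simp at hlen
  have hcol := hT.2.2.1 r R.length hr1 hlen
  have htop : entryAt T r R.length = lam.sum := by
    rw [entryAt, hR, List.getD_append_right _ _ _ _ le_rfl, Nat.sub_self]; rfl
  have hbelow : entryAt T (r + 1) R.length ≤ lam.sum := by
    refine hT.le_sum_of_mem_flatten (mem_flatten_of_mem_getD (j := r + 1) ?_)
    rw [entryAt, List.getD_eq_getElem _ _ hlen]
    exact List.getElem_mem hlen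
  omega

theorem IsSYT.addAtRow_deleteMax (hT : IsSYT lam T) (hpos : ∀ x ∈ lam, 0 < x)
    (hn : 0 < lam.sum) : addAtRow (deleteMax T) (rowOf T lam.sum) lam.sum = T := by
  obtain ⟨hlt, R, hR⟩ := hT.exists_getD_rowOf_eq hn
  have hrem := hT.getD_succ_lt_getD_rowOf hn
  rw [deleteMax_eq_removeRowLast, hT.length_flatten]
  refine addAtRow_removeRowLast (forall_ne_nil_of_map_length_eq hT.1 hpos) hR fun hR0 => ?_
  subst hR0
  have h1 : lam.getD (rowOf T lam.sum) 0 = 1 := by rw [← length_getD_of_map_length_eq hT.1, hR]; rfl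
  by_contra hne
  have hpos' := List.length_pos_of_ne_nil (forall_ne_nil_of_map_length_eq hT.1 hpos _
    (List.getElem_mem (by omega : rowOf T lam.sum + 1 < T.length)))
  rw [← List.getD_eq_getElem (d := []), length_getD_of_map_length_eq hT.1] at hpos'
  omega

theorem IsSYT.idx_eq (hT : IsSYT lam T) :
    idx T = removableCount lam (rowOf T lam.sum + 1) := by
  rw [idx, hT.1, hT.length_flatten]

theorem IsSYT.sum_pos (hT : IsSYT lam T) (hidx : 1 ≤ idx T) : 0 < lam.sum := by
  rw [hT.idx_eq] at hidx
  refine Nat.pos_of_ne_zero fun h0 => ?_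
  have hzero : ∀ t, lam.getD t 0 = 0 := fun t => by
    rcases Nat.lt_or_ge t lam.length with ht | ht
    · rw [List.getD_eq_getElem _ _ ht]
      exact List.sum_eq_zero_iff.1 h0 _ (List.getElem_mem ht)
    · exact List.getD_eq_default _ _ ht
  simp only [removableCount, hzero, lt_self_iff_false, decide_false, List.filter_false,
    List.length_nil] at hidx
  omega

end SYT

/-! ### The tableau `CSS_i(λ)` -/

theorem colHeight_cons (a : ℕ) (μ : List ℕ) (c : ℕ) :
    colHeight (a :: μ) c = colHeight μ c + if c < a then 1 else 0 := by
  by_cases h : c < a <;> simp [colHeight, h]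

theorem sum_range_ite_lt (M a : ℕ) :
    ((List.range M).map fun c => if c < a then 1 else 0).sum = min M a := by
  induction M with
  | zero => simp
  | succ M ih =>
    rw [List.range_succ, List.map_append, List.sum_append, ih]
    by_cases h : M < a <;> simp [h] <;> omega

theorem sum_range_colHeight_le (μ : List ℕ) (M : ℕ) :
    ((List.range M).map (colHeight μ)).sum ≤ μ.sum := by
  induction μ with
  | nil => simp [show colHeight [] = fun _ => 0 from rfl]
  | cons a μ ih =>
    rw [show colHeight (a :: μ) = _ from funext (colHeight_cons a μ), List.sum_map_add,
      sum_range_ite_lt, List.sum_cons]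
    omega

theorem le_colHeight {μ : List ℕ} (hμ : Antitone (μ.getD · 0)) {t j : ℕ} (hj : j < μ.getD t 0) :
    t + 1 ≤ colHeight μ j := by
  have ht : t < μ.length := by
    by_contra h
    rw [List.getD_eq_default _ _ (by omega)] at hj
    omega
  have htake : (μ.take (t + 1)).filter (fun x => decide (j < x)) = μ.take (t + 1) := by
    refine List.filter_eq_self.2 fun x hx => ?_
    obtain ⟨s, hs, rfl⟩ := List.mem_take_iff_getElem.1 hx
    have := hμ (show s ≤ t by omega)
    dsimp only at this
    rw [List.getD_eq_getElem (l := μ) (n := s) _ (by omega)] at this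
    simpa using lt_of_lt_of_le hj this
  have := ((List.take_sublist (t + 1) μ).filter (fun x => decide (j < x))).length_le
  rw [htake, List.length_take_of_le (by omega)] at this
  exact this

theorem length_getD_colStd (μ : List ℕ) (t : ℕ) : ((colStd μ).getD t []).length = μ.getD t 0 := by
  rcases Nat.lt_or_ge t μ.length with ht | ht
  · rw [List.getD_eq_getElem (colStd μ) _ (by simpa [colStd] using ht),
      List.getD_eq_getElem μ _ ht]
    simp [colStd, List.getElem?_eq_getElem ht]
  · rw [List.getD_eq_default _ _ (by simpa [colStd] using ht), List.getD_eq_default _ _ ht]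
    rfl

theorem le_sum_of_mem_colStd {μ : List ℕ} (hμ : Antitone (μ.getD · 0)) {t v : ℕ}
    (hv : v ∈ (colStd μ).getD t []) : v ≤ μ.sum := by
  rcases Nat.lt_or_ge t μ.length with ht | ht
  · rw [colStd, List.getD_eq_getElem _ _ (by simpa using ht)] at hv
    simp only [List.getElem_map, List.getElem_range, List.mem_map, List.mem_range] at hv
    obtain ⟨j, hj, rfl⟩ := hv
    have hsum := sum_range_colHeight_le μ (j + 1)
    rw [List.range_succ, List.map_append, List.sum_append, List.map_singleton,
      List.sum_singleton] at hsum
    have := le_colHeight hμ hj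
    omega
  · rw [List.getD_eq_default _ _ (by simpa [colStd] using ht)] at hv
    simp at hv

theorem antitone_getD_of_pairwise {lam : List ℕ} (hsort : lam.Pairwise (· ≥ ·)) :
    Antitone (lam.getD · 0) := by
  intro a b hab
  rcases Nat.lt_or_ge b lam.length with hb | hb
  · dsimp only
    rw [List.getD_eq_getElem _ _ hb, List.getD_eq_getElem _ _ (by omega)]
    rcases hab.eq_or_lt with rfl | hlt
    · exact le_rfl
    · exact List.pairwise_iff_getElem.1 hsort a b (by omega) hb hlt
  · dsimp only
    rw [List.getD_eq_default _ _ hb]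
    exact Nat.zero_le _

/-- The shape `lam'` that `cssI` fills column by column, where `r` is the row of the chosen
removable box. -/
def trimRows (lam : List ℕ) (r : ℕ) : List ℕ :=
  (List.range lam.length).map fun t => if t ≤ r then lam.getD t 0 - 1 else lam.getD t 0

theorem getD_trimRows (lam : List ℕ) (r t : ℕ) :
    (trimRows lam r).getD t 0 = if t ≤ r then lam.getD t 0 - 1 else lam.getD t 0 := by
  rcases Nat.lt_or_ge t lam.length with ht | ht
  · rw [trimRows, List.getD_eq_getElem _ _ (by simpa using ht)]
    simp
  · rw [List.getD_eq_default _ _ (by simpa [trimRows] using ht), List.getD_eq_default _ _ ht]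
    split <;> rfl

theorem antitone_trimRows {lam : List ℕ} (hlam : Antitone (lam.getD · 0)) {r : ℕ}
    (hr : lam.getD (r + 1) 0 < lam.getD r 0) : Antitone ((trimRows lam r).getD · 0) := by
  intro a b hab
  dsimp only
  rw [getD_trimRows, getD_trimRows]
  have hab' : lam.getD b 0 ≤ lam.getD a 0 := hlam hab
  by_cases hb : b ≤ r
  · rw [if_pos hb, if_pos (hab.trans hb)]; omega
  · by_cases ha : a ≤ r
    · have h₁ : lam.getD r 0 ≤ lam.getD a 0 := hlam ha
      have h₂ : lam.getD b 0 ≤ lam.getD (r + 1) 0 := hlam (show r + 1 ≤ b by omega)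
      rw [if_neg hb, if_pos ha]; omega
    · rw [if_neg hb, if_neg ha]; exact hab'

theorem trimRows_cons_zero (a : ℕ) (lam : List ℕ) : trimRows (a :: lam) 0 = (a - 1) :: lam := by
  refine List.ext_getElem (by simp [trimRows]) fun t h₁ h₂ => ?_
  cases t with
  | zero => simp [trimRows]
  | succ t => simp [trimRows, List.getElem?_eq_getElem (by simpa using h₂ : t < lam.length)]

theorem trimRows_cons_succ (a : ℕ) (lam : List ℕ) (r : ℕ) :
    trimRows (a :: lam) (r + 1) = (a - 1) :: trimRows lam r := by
  refine List.ext_getElem (by simp [trimRows]) fun t h₁ h₂ => ?_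
  cases t <;> simp [trimRows]

theorem sum_trimRows {lam : List ℕ} (hpos : ∀ x ∈ lam, 0 < x) {r : ℕ} (hr : r < lam.length) :
    (trimRows lam r).sum + (r + 1) = lam.sum := by
  induction lam generalizing r with
  | nil => simp at hr
  | cons a lam ih =>
    have ha := hpos a (by simp)
    cases r with
    | zero => rw [trimRows_cons_zero, List.sum_cons, List.sum_cons]; omega
    | succ r =>
      have := ih (fun x hx => hpos x (by simp [hx])) (by simpa using hr)
      rw [trimRows_cons_succ, List.sum_cons, List.sum_cons]; omega

section CSS

variable {lam : List ℕ} {i r : ℕ}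

theorem length_cssI : (cssI lam i).length = lam.length := by simp [cssI]

theorem getD_cssI (hi : (removableRows lam).getD (i - 1) 0 = r) {t : ℕ} (ht : t < lam.length) :
    (cssI lam i).getD t [] = if t ≤ r then
      (colStd (trimRows lam r)).getD t [] ++ [lam.sum - (r - t)]
    else (colStd (trimRows lam r)).getD t [] := by
  subst hi
  rw [cssI, List.getD_eq_getElem _ _ (by simpa using ht)]
  simp only [List.getElem_map, List.getElem_range]
  rfl

theorem map_length_cssI (hpos : ∀ x ∈ lam, 0 < x) (hi : (removableRows lam).getD (i - 1) 0 = r) :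
    (cssI lam i).map List.length = lam := by
  refine List.ext_getElem (by simp [length_cssI]) fun t h₁ h₂ => ?_
  have ht : t < lam.length := h₂
  have hlam := hpos _ (List.getElem_mem ht)
  rw [List.getElem_map, ← List.getD_eq_getElem (d := []), getD_cssI hi ht]
  by_cases htr : t ≤ r
  · rw [if_pos htr, List.length_append, length_getD_colStd, getD_trimRows, if_pos htr,
      List.getD_eq_getElem _ _ ht, List.length_singleton]
    omega
  · rw [if_neg htr, length_getD_colStd, getD_trimRows, if_neg htr, List.getD_eq_getElem _ _ ht]

theorem rowOf_cssI (hsort : lam.Pairwise (· ≥ ·)) (hpos : ∀ x ∈ lam, 0 < x)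
    (hi : (removableRows lam).getD (i - 1) 0 = r) (hr : lam.getD (r + 1) 0 < lam.getD r 0) :
    rowOf (cssI lam i) lam.sum = r := by
  have hrL := lt_length_of_getD_succ_lt hr
  have hsum := sum_trimRows hpos hrL
  refine rowOf_eq (by rwa [length_cssI]) ?_ fun j hj hmem => ?_
  · rw [getD_cssI hi hrL, if_pos le_rfl, Nat.sub_self, Nat.sub_zero]
    simp
  · rw [getD_cssI hi (by omega), if_pos hj.le, List.mem_append, List.mem_singleton] at hmem
    rcases hmem with hmem | heq
    · have := le_sum_of_mem_colStd (antitone_trimRows (antitone_getD_of_pairwise hsort) hr) hmem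
      omega
    · omega

theorem deleteMax_cssI (hsort : lam.Pairwise (· ≥ ·)) (hpos : ∀ x ∈ lam, 0 < x)
    (hi : (removableRows lam).getD (i - 1) 0 = r) (hr : lam.getD (r + 1) 0 < lam.getD r 0) :
    deleteMax (cssI lam i) = removeRowLast (cssI lam i) r := by
  rw [deleteMax_eq_removeRowLast, List.length_flatten, map_length_cssI hpos hi,
    rowOf_cssI hsort hpos hi hr]

theorem addAtRow_deleteMax_cssI (hsort : lam.Pairwise (· ≥ ·)) (hpos : ∀ x ∈ lam, 0 < x)
    (hi : (removableRows lam).getD (i - 1) 0 = r) (hr : lam.getD (r + 1) 0 < lam.getD r 0) :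
    addAtRow (deleteMax (cssI lam i)) r lam.sum = cssI lam i := by
  have hrL := lt_length_of_getD_succ_lt hr
  rw [deleteMax_cssI hsort hpos hi hr]
  refine addAtRow_removeRowLast (forall_ne_nil_of_map_length_eq (map_length_cssI hpos hi) hpos)
    (by rw [getD_cssI hi hrL, if_pos le_rfl, Nat.sub_self, Nat.sub_zero]) fun hB => ?_
  have h₁ := length_getD_colStd (trimRows lam r) r
  rw [hB, getD_trimRows, if_pos le_rfl] at h₁
  rw [length_cssI]
  by_contra hne
  have := hpos _ (List.getElem_mem (show r + 1 < lam.length by omega))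
  rw [← List.getD_eq_getElem _ 0] at this
  rw [List.length_nil] at h₁
  omega

theorem mem_getD_deleteMax_cssI (hsort : lam.Pairwise (· ≥ ·)) (hpos : ∀ x ∈ lam, 0 < x)
    (hi : (removableRows lam).getD (i - 1) 0 = r) (hr : lam.getD (r + 1) 0 < lam.getD r 0)
    {m : ℕ} (hm : m < r) : lam.sum - r + m ∈ (deleteMax (cssI lam i)).getD m [] := by
  have hrL := lt_length_of_getD_succ_lt hr
  have hsum := sum_trimRows hpos hrL
  rw [deleteMax_cssI hsort hpos hi hr, getD_removeRowLast_of_lt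
    (forall_ne_nil_of_map_length_eq (map_length_cssI hpos hi) hpos) hm, getD_cssI hi (by omega),
    if_pos hm.le, List.mem_append, List.mem_singleton]
  right
  omega

end CSS

/-! ### One-line notation -/

theorem nodup_oneLine (n : ℕ) (v : Perm (Fin n)) : (oneLine n v).Nodup :=
  (List.nodup_finRange n).map fun a b hab => v.injective (Fin.ext (by simpa using hab))

theorem length_oneLine (n : ℕ) (v : Perm (Fin n)) : (oneLine n v).length = n := by
  simp [oneLine]

theorem le_of_mem_oneLine {n : ℕ} {v : Perm (Fin n)} {y : ℕ} (hy : y ∈ oneLine n v) : y ≤ n := by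
  obtain ⟨j, -, rfl⟩ := List.mem_map.1 hy
  exact (v j).isLt

theorem rsk_insert_largest_general (n : ℕ) (lam : List ℕ) (hlam : IsPartition n lam)
    (i : ℕ) (hi1 : 1 ≤ i)
    (k : ℕ) (hk : k = (removableRows lam).getD (i - 1) 0 + 1)
    (T : List (List ℕ)) (hT : IsSYT lam T) (hiT : idx T = i)
    (u : Perm (Fin n)) (hu : RSKmap n u = (T, cssI lam i))
    (ut : Perm (Fin (n - 1)))
    (hut : RSKmap (n - 1) ut = (deleteMax T, deleteMax (cssI lam i))) :
    oneLine n u =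
      (oneLine (n - 1) ut).take (n - k) ++ n :: (oneLine (n - 1) ut).drop (n - k) := by
  obtain ⟨hsort, hpos, rfl⟩ := hlam
  have hn := hT.sum_pos (hiT ▸ hi1)
  set r := rowOf T lam.sum
  have hr := hT.getD_succ_lt_getD_rowOf hn
  have hi : (removableRows lam).getD (i - 1) 0 = r := by
    rw [← hiT, hT.idx_eq]; exact removableRows_getD_removableCount hr
  obtain rfl : k = r + 1 := by rw [hk, hi]
  have hrn : r + 1 ≤ lam.sum := sum_trimRows hpos (lt_length_of_getD_succ_lt hr) ▸ le_add_self
  set v := oneLine (lam.sum - 1) ut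
  have hv : ∀ y ∈ v, y < lam.sum := fun y hy => by have := le_of_mem_oneLine hy; omega
  have key := rsk_insert_max (p := lam.sum - (r + 1)) (q := r) (N := lam.sum)
    (by rw [length_oneLine]; omega) hv fun m hm => by
      rw [show rsk v = _ from hut, show lam.sum - (r + 1) + m + 1 = lam.sum - r + m by omega]
      exact mem_getD_deleteMax_cssI hsort hpos hi hr hm
  rw [show rsk v = _ from hut, hT.addAtRow_deleteMax hpos hn,
    show lam.sum - (r + 1) + r + 1 = lam.sum by omega, addAtRow_deleteMax_cssI hsort hpos hi hr]
    at key
  refine rsk_injective (nodup_oneLine _ _) ?_ (hu.trans key.symm)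
  rw [List.nodup_middle, List.take_append_drop]
  exact (nodup_oneLine _ _).cons fun h => (hv _ h).false

/-- If `u ↝ (T, CSS_i(lam))` and `ũ ↝ (d_i T, d_i CSS_i(lam))` under RSK, where the `i`-th
removable box of `lam` lies in row `k` (1-based), then the one-line notation of `u` is that of
`ũ` with the value `n` inserted after the `(n-k)`-th entry. -/
theorem rsk_insert_largest (n : ℕ) (lam : List ℕ) (hlam : IsPartition n lam)
    (i : ℕ) (hi1 : 1 ≤ i) (hi2 : i ≤ numRemovable lam)
    (k : ℕ) (hk : k = (removableRows lam).getD (i - 1) 0 + 1)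
    (T : List (List ℕ)) (hT : IsSYT lam T) (hiT : idx T = i)
    (u : Perm (Fin n)) (hu : RSKmap n u = (T, cssI lam i))
    (ut : Perm (Fin (n - 1)))
    (hut : RSKmap (n - 1) ut = (deleteMax T, deleteMax (cssI lam i))) :
    oneLine n u =
      (oneLine (n - 1) ut).take (n - k) ++ n :: (oneLine (n - 1) ut).drop (n - k) :=
  rsk_insert_largest_general n lam hlam i hi1 k hk T hT hiT u hu ut hut

end KLPaper
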